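/- For every $\sigma > 0$, the Mills ratio of the standard Gaussian satisfies $\frac{1 - \Phi(\sigma)}{\phi(\sigma)} > \frac{\pi}{\sqrt{2\pi + \sigma^2} + (\pi - 1)\sigma}$, where $\phi$ and $\Phi$ are the standard Gaussian density and distribution function. -/

import Mathlib

/-!
Put `D(t) = √(2π + t²) + (π - 1)t` and `g(t) = 1 - Φ(t) - π φ(t) / D(t)`. Then `g(0) = 0` since
`Φ(0) = 1/2` and `π φ(0) = D(0) / 2`, and `g(t) → 0` as `t → ∞`. Using `φ' = -tφ` and clearing the
square root, `g'(t)` is a positive multiple of `-(3 - π + (π - 2) t / (√(2π + t²) + t))`, and the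
bracket is strictly increasing. Hence on `[0, ∞)` the function `g` first increases and then
decreases (one phase may be empty), which together with its zero boundary values forces `g > 0`.
-/

open MeasureTheory

/-- The standard Gaussian density. -/
noncomputable def stdGaussPdf (s : ℝ) : ℝ :=
  (Real.sqrt (2 * Real.pi))⁻¹ * Real.exp (-s ^ 2 / 2)

/-- The standard Gaussian cumulative distribution function. -/
noncomputable def stdGaussCdf (s : ℝ) : ℝ := ∫ t in Set.Iic s, stdGaussPdf t

open Real Set Filter Topology

lemma stdGaussPdf_eq_gaussianPDFReal : stdGaussPdf = ProbabilityTheory.gaussianPDFReal 0 1 := by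
  ext s
  simp [stdGaussPdf, ProbabilityTheory.gaussianPDFReal]

lemma stdGaussPdf_pos (s : ℝ) : 0 < stdGaussPdf s := by
  unfold stdGaussPdf
  positivity

lemma stdGaussPdf_neg (s : ℝ) : stdGaussPdf (-s) = stdGaussPdf s := by
  simp [stdGaussPdf]

lemma integrable_stdGaussPdf : Integrable stdGaussPdf := by
  rw [stdGaussPdf_eq_gaussianPDFReal]
  exact ProbabilityTheory.integrable_gaussianPDFReal 0 1

lemma integral_stdGaussPdf : ∫ s, stdGaussPdf s = 1 := by
  rw [stdGaussPdf_eq_gaussianPDFReal]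
  exact ProbabilityTheory.integral_gaussianPDFReal_eq_one 0 one_ne_zero

lemma continuous_stdGaussPdf : Continuous stdGaussPdf := by
  unfold stdGaussPdf
  fun_prop

lemma hasDerivAt_stdGaussPdf (s : ℝ) : HasDerivAt stdGaussPdf (-s * stdGaussPdf s) s := by
  have hexponent : HasDerivAt (fun x : ℝ => -x ^ 2 / 2) (-s) s :=
    ((hasDerivAt_pow 2 s).neg.div_const 2).congr_deriv (by norm_num [neg_div])
  exact (hexponent.exp.const_mul (√(2 * π))⁻¹).congr_deriv (by unfold stdGaussPdf; ring)

lemma tendsto_stdGaussPdf_atTop : Tendsto stdGaussPdf atTop (𝓝 0) := by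
  have hsq : Tendsto (fun s : ℝ => s ^ 2 / 2) atTop atTop :=
    (tendsto_pow_atTop two_ne_zero).atTop_div_const two_pos
  convert (tendsto_exp_neg_atTop_nhds_zero.comp hsq).const_mul (√(2 * π))⁻¹ using 1
  · ext; simp [stdGaussPdf, neg_div]
  · simp

lemma stdGaussCdf_zero : stdGaussCdf 0 = 1 / 2 := by
  have hIoi : ∫ s in Ioi 0, stdGaussPdf s = stdGaussCdf 0 := by
    rw [stdGaussCdf, ← neg_zero, ← integral_comp_neg_Iic]
    simp_rw [stdGaussPdf_neg, neg_zero]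
  have hsum : stdGaussCdf 0 + ∫ s in Ioi 0, stdGaussPdf s = 1 := by
    rw [stdGaussCdf, ← setIntegral_union (Iic_disjoint_Ioi le_rfl) measurableSet_Ioi
      integrable_stdGaussPdf.integrableOn integrable_stdGaussPdf.integrableOn, Iic_union_Ioi,
      setIntegral_univ, integral_stdGaussPdf]
  linarith

lemma hasDerivAt_stdGaussCdf (s : ℝ) : HasDerivAt stdGaussCdf (stdGaussPdf s) s := by
  have hcdf : stdGaussCdf = fun x => stdGaussCdf 0 + ∫ t in (0 : ℝ)..x, stdGaussPdf t := by
    ext x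
    rw [stdGaussCdf, stdGaussCdf, ← intervalIntegral.integral_Iic_sub_Iic
      integrable_stdGaussPdf.integrableOn integrable_stdGaussPdf.integrableOn]
    ring
  rw [hcdf]
  exact (intervalIntegral.integral_hasDerivAt_right integrable_stdGaussPdf.intervalIntegrable
    (continuous_stdGaussPdf.stronglyMeasurableAtFilter _ _)
    continuous_stdGaussPdf.continuousAt).const_add _

lemma tendsto_stdGaussCdf_atTop : Tendsto stdGaussCdf atTop (𝓝 1) := by
  have h := tendsto_setIntegral_of_monotone (μ := volume) (fun s : ℝ => measurableSet_Iic)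
    (fun _ _ hab => Iic_subset_Iic.mpr hab) integrable_stdGaussPdf.integrableOn
  rwa [iUnion_Iic, setIntegral_univ, integral_stdGaussPdf] at h

theorem pos_of_hasDerivAt_neg_mul_of_strictMonoOn {f c r : ℝ → ℝ} {a σ : ℝ}
    (hcont : ContinuousOn f (Ici a)) (hderiv : ∀ x ∈ Ioi a, HasDerivAt f (-(c x * r x)) x)
    (hc : ∀ x ∈ Ioi a, 0 < c x) (hr : StrictMonoOn r (Ioi a)) (ha : f a = 0)
    (hlim : Tendsto f atTop (𝓝 0)) (hσ : a < σ) : 0 < f σ := by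
  rcases lt_or_ge (r σ) 0 with hrσ | hrσ
  · have hmono : StrictMonoOn f (Icc a σ) := by
      refine strictMonoOn_of_deriv_pos (convex_Icc a σ) (hcont.mono Icc_subset_Ici_self) ?_
      intro x hx
      rw [interior_Icc] at hx
      rw [(hderiv x hx.1).deriv, neg_pos]
      exact mul_neg_of_pos_of_neg (hc x hx.1) ((hr hx.1 hσ hx.2).trans hrσ)
    simpa [ha] using hmono (left_mem_Icc.2 hσ.le) (right_mem_Icc.2 hσ.le) hσ
  · have hanti : StrictAntiOn f (Ici σ) := by
      refine strictAntiOn_of_deriv_neg (convex_Ici σ) (hcont.mono (Ici_subset_Ici.2 hσ.le)) ?_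
      intro x hx
      rw [interior_Ici] at hx
      have hax : x ∈ Ioi a := hσ.trans hx
      rw [(hderiv x hax).deriv, neg_lt_zero]
      exact mul_pos (hc x hax) (hrσ.trans_lt (hr hσ hax hx))
    have hσ1 : σ + 1 ∈ Ici σ := mem_Ici.2 (by linarith)
    have hdrop : f (σ + 1) < f σ := hanti self_mem_Ici hσ1 (lt_add_one σ)
    have hlimit : 0 ≤ f (σ + 1) := by
      refine le_of_tendsto hlim ?_
      filter_upwards [eventually_ge_atTop (σ + 1)] with x hx
      exact hanti.antitoneOn hσ1 (mem_Ici.2 (by linarith)) hx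
    linarith

namespace MillsRatio

noncomputable def rad (t : ℝ) : ℝ := √(2 * π + t ^ 2)

noncomputable def denom (t : ℝ) : ℝ := rad t + (π - 1) * t

noncomputable def gap (t : ℝ) : ℝ := 1 - stdGaussCdf t - π * stdGaussPdf t / denom t

noncomputable def slopeFactor (t : ℝ) : ℝ := 3 - π + (π - 2) * (t / (rad t + t))

lemma rad_sq (t : ℝ) : rad t ^ 2 = 2 * π + t ^ 2 :=
  sq_sqrt (by positivity)

lemma rad_pos (t : ℝ) : 0 < rad t :=
  sqrt_pos.2 (by positivity)

lemma le_rad (t : ℝ) : t ≤ rad t :=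
  (le_abs_self t).trans (abs_le_sqrt (by linarith [pi_pos]))

lemma denom_pos {t : ℝ} (ht : 0 ≤ t) : 0 < denom t := by
  unfold denom
  exact add_pos_of_pos_of_nonneg (rad_pos t) (mul_nonneg (by linarith [pi_gt_three]) ht)

lemma hasDerivAt_rad (t : ℝ) : HasDerivAt rad (t / rad t) t := by
  have hinner : HasDerivAt (fun x : ℝ => 2 * π + x ^ 2) (2 * t) t := by
    simpa using (hasDerivAt_pow 2 t).const_add (2 * π)
  refine (hinner.sqrt (by positivity)).congr_deriv ?_
  rw [rad]
  ring

lemma gap_zero : gap 0 = 0 := by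
  have hsq : √(2 * π) ^ 2 = 2 * π := sq_sqrt (by positivity)
  have hpos : 0 < √(2 * π) := sqrt_pos.2 (by positivity)
  simp only [gap, denom, rad, stdGaussPdf, stdGaussCdf_zero, ne_eq, OfNat.ofNat_ne_zero,
    not_false_eq_true, zero_pow, add_zero, mul_zero, neg_zero, zero_div, exp_zero, mul_one]
  field_simp
  linear_combination hsq

lemma tendsto_gap_atTop : Tendsto gap atTop (𝓝 0) := by
  have hdenom : Tendsto denom atTop atTop := by
    refine tendsto_atTop_mono (fun t => ?_) (tendsto_id.const_mul_atTop pi_pos)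
    simp only [denom, id]
    linarith [le_rad t]
  have htail : Tendsto (fun t => 1 - stdGaussCdf t) atTop (𝓝 0) := by
    simpa using tendsto_stdGaussCdf_atTop.const_sub 1
  have hgap := htail.sub ((tendsto_stdGaussPdf_atTop.const_mul π).div_atTop hdenom)
  rw [sub_zero] at hgap
  exact hgap

lemma hasDerivAt_gap {t : ℝ} (ht : 0 ≤ t) :
    HasDerivAt gap
      (-(2 * π ^ 2 * stdGaussPdf t / (denom t ^ 2 * rad t * (rad t + t)) * slopeFactor t)) t := by
  have hdenom : HasDerivAt denom (t / rad t + (π - 1)) t :=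
    (hasDerivAt_rad t).add ((hasDerivAt_id t).const_mul (π - 1)) |>.congr_deriv (by ring)
  have hgap := ((hasDerivAt_stdGaussCdf t).const_sub 1).sub
    (((hasDerivAt_stdGaussPdf t).const_mul π).div hdenom (denom_pos ht).ne')
  refine hgap.congr_deriv ?_
  have hrad := rad_pos t
  have hdenom_pos := denom_pos ht
  have hrad_add := add_pos_of_pos_of_nonneg hrad ht
  rw [slopeFactor]
  field_simp
  unfold denom
  linear_combination (-stdGaussPdf t * (π * (π - 2) * t +
    (rad t ^ 2 + (π - 1) * rad t * t + π * (3 - π)) * (rad t + t))) * rad_sq t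

lemma strictMonoOn_slopeFactor : StrictMonoOn slopeFactor (Ioi 0) := by
  intro a (ha : 0 < a) b (hb : 0 < b) hab
  have hcross : a * rad b < b * rad a := by
    refine lt_of_pow_lt_pow_left₀ 2 (mul_pos hb (rad_pos a)).le ?_
    rw [mul_pow, mul_pow, rad_sq, rad_sq]
    nlinarith [mul_lt_mul_of_pos_left (pow_lt_pow_left₀ hab (le_of_lt ha) two_ne_zero) pi_pos]
  have hfrac : a / (rad a + a) < b / (rad b + b) := by
    rw [div_lt_div_iff₀ (by linarith [rad_pos a]) (by linarith [rad_pos b])]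
    linarith
  unfold slopeFactor
  gcongr
  linarith [pi_gt_three]

lemma gap_pos {σ : ℝ} (hσ : 0 < σ) : 0 < gap σ := by
  refine pos_of_hasDerivAt_neg_mul_of_strictMonoOn
    (fun t ht => (hasDerivAt_gap ht).continuousAt.continuousWithinAt)
    (fun t ht => hasDerivAt_gap (le_of_lt ht)) (fun t (ht : 0 < t) => ?_)
    strictMonoOn_slopeFactor gap_zero tendsto_gap_atTop hσ
  have hdenom := denom_pos ht.le
  have hpdf := stdGaussPdf_pos t
  have hrad := rad_pos t
  have hrad_add : 0 < rad t + t := by linarith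
  positivity

end MillsRatio

/-- lower bound on the Mills ratio of the standard Gaussian:
`(1 - Φ(σ))/φ(σ) > π / (√(2π + σ²) + (π-1)σ)` for every `σ > 0`. -/
theorem stmt_6 (σ : ℝ) (hσ : 0 < σ) :
    Real.pi / (Real.sqrt (2 * Real.pi + σ ^ 2) + (Real.pi - 1) * σ)
      < (1 - stdGaussCdf σ) / stdGaussPdf σ := by
  have hgap := MillsRatio.gap_pos hσ
  rw [MillsRatio.gap] at hgap
  show π / MillsRatio.denom σ < _
  rw [lt_div_iff₀ (stdGaussPdf_pos σ), div_mul_eq_mul_div]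
  linarith
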